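/- arXiv:2112.11196 — 4 statements merged into one kernel-verified Lean document; each statement's English description precedes it below -/
import Mathlib

section
/- Let I = [x₀, x_N] be a compact interval with partition x₀ < x₁ < ... < x_N, and let L_i(x) = a_i x + e_i with a_i = (x_i - x_{i-1})/(x_N - x₀) be the affine maps sending [x₀,x_N] onto [x_{i-1},x_i]. Let f, b : I → ℝ be continuous with b(x₀) = f(x₀), b(x_N) = f(x_N), let α = (α₁,...,α_N) with |α_i| < 1, and let f^α : I → ℝ be the unique continuous function satisfying the self-referential equation f^α(x) = f(x) + α_i (f^α − b)(L_i^{-1}(x)) for x ∈ [x_{i-1}, x_i], i = 1,...,N. Then ∫_{x₀}^{x_N} f^α(x) dx = (1/(1−λ)) ∫_{x₀}^{x_N} f(x) dx − (λ/(1−λ)) ∫_{x₀}^{x_N} b(x) dx, where λ = Σ_{i=1}^N a_i α_i (assuming λ ≠ 1). -/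
/-!
Integrating the self-referential equation over the `i`-th subinterval and substituting
`u = L_i⁻¹ t` gives `∫ fα = ∫ f + a_i α_i (∫_I fα - ∫_I b)` there. Summing over `i`, the
integral `∫_I fα` satisfies the linear equation `∫_I fα = ∫_I f + λ (∫_I fα - ∫_I b)`,
which is solved using `λ ≠ 1`.
-/

/-- Slope of the increasing affine map `L i` sending `[x 0, x N]` onto `[x (i-1), x i]`. -/
noncomputable def aCoef (x : ℕ → ℝ) (N i : ℕ) : ℝ := (x i - x (i - 1)) / (x N - x 0)

/-- Intercept of `L i`. -/
noncomputable def eCoef (x : ℕ → ℝ) (N i : ℕ) : ℝ :=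
  (x N * x (i - 1) - x 0 * x i) / (x N - x 0)

/-- Inverse of `L i t = aCoef * t + eCoef`. -/
noncomputable def Linv (x : ℕ → ℝ) (N i : ℕ) (t : ℝ) : ℝ :=
  (t - eCoef x N i) / aCoef x N i

open MeasureTheory Set

section Partition

variable {x : ℕ → ℝ} {N i : ℕ}

theorem Linv_eq_div_add (t : ℝ) :
    Linv x N i t = t / aCoef x N i + -eCoef x N i / aCoef x N i := by
  unfold Linv; ring

theorem Linv_apply_left (hN : x N ≠ x 0) (hi : x i ≠ x (i - 1)) :
    Linv x N i (x (i - 1)) = x 0 := by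
  have hN' : x N - x 0 ≠ 0 := sub_ne_zero.mpr hN
  have hi' : x i - x (i - 1) ≠ 0 := sub_ne_zero.mpr hi
  unfold Linv eCoef aCoef
  field_simp
  ring

theorem Linv_apply_right (hN : x N ≠ x 0) (hi : x i ≠ x (i - 1)) : Linv x N i (x i) = x N := by
  have hN' : x N - x 0 ≠ 0 := sub_ne_zero.mpr hN
  have hi' : x i - x (i - 1) ≠ 0 := sub_ne_zero.mpr hi
  unfold Linv eCoef aCoef
  field_simp
  ring

theorem integral_comp_Linv (hN : x N ≠ x 0) (hi : x i ≠ x (i - 1)) (g : ℝ → ℝ) :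
    ∫ t in x (i - 1)..x i, g (Linv x N i t) = aCoef x N i * ∫ u in x 0..x N, g u := by
  have ha : aCoef x N i ≠ 0 := div_ne_zero (sub_ne_zero.mpr hi) (sub_ne_zero.mpr hN)
  simp_rw [Linv_eq_div_add]
  rw [intervalIntegral.integral_comp_div_add g ha, smul_eq_mul, ← Linv_eq_div_add,
    ← Linv_eq_div_add, Linv_apply_left hN hi, Linv_apply_right hN hi]

theorem integral_subinterval_of_selfReferential {f b fα : ℝ → ℝ} {c : ℝ}
    (hN : x N ≠ x 0) (hi : x (i - 1) < x i)
    (hfα_i : IntervalIntegrable fα volume (x (i - 1)) (x i))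
    (hf_i : IntervalIntegrable f volume (x (i - 1)) (x i))
    (hfα : IntervalIntegrable fα volume (x 0) (x N))
    (hb : IntervalIntegrable b volume (x 0) (x N))
    (hself : ∀ t ∈ Icc (x (i - 1)) (x i),
      fα t = f t + c * (fα (Linv x N i t) - b (Linv x N i t))) :
    ∫ t in x (i - 1)..x i, fα t = (∫ t in x (i - 1)..x i, f t)
      + aCoef x N i * c * ((∫ t in x 0..x N, fα t) - ∫ t in x 0..x N, b t) := by
  have hdiff : ∫ t in x (i - 1)..x i, fα t - f t
      = ∫ t in x (i - 1)..x i, c * (fα (Linv x N i t) - b (Linv x N i t)) := by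
    refine intervalIntegral.integral_congr fun t ht ↦ ?_
    rw [uIcc_of_le hi.le] at ht
    simp only [hself t ht, add_sub_cancel_left]
  rw [intervalIntegral.integral_sub hfα_i hf_i, intervalIntegral.integral_const_mul,
    integral_comp_Linv hN hi.ne' (fun u ↦ fα u - b u), intervalIntegral.integral_sub hfα hb]
    at hdiff
  linear_combination hdiff

theorem sum_Icc_integral_adjacent_intervals {g : ℝ → ℝ}
    (hint : ∀ k < N, IntervalIntegrable g volume (x k) (x (k + 1))) :
    ∑ i ∈ Finset.Icc 1 N, ∫ t in x (i - 1)..x i, g t = ∫ t in x 0..x N, g t := by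
  rw [← intervalIntegral.sum_integral_adjacent_intervals hint, ← Finset.Ico_add_one_right_eq_Icc,
    Finset.sum_Ico_eq_sum_range]
  simp [Nat.add_comm 1]

theorem ContinuousOn.intervalIntegrable_of_monotoneOn {g : ℝ → ℝ}
    (hx : MonotoneOn x (Iic N)) (hg : ContinuousOn g (Icc (x 0) (x N))) {j k : ℕ}
    (hj : j ≤ N) (hk : k ≤ N) : IntervalIntegrable g volume (x j) (x k) := by
  have hmem : ∀ {m}, m ≤ N → x m ∈ Icc (x 0) (x N) := fun hm ↦
    ⟨hx (Nat.zero_le _) hm (Nat.zero_le _), hx hm (mem_Iic.mpr le_rfl) hm⟩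
  exact (hg.mono (uIcc_subset_Icc (hmem hj) (hmem hk))).intervalIntegrable

end Partition

theorem integral_alpha_fractal_general (N : ℕ) (hN : 1 ≤ N) (x : ℕ → ℝ)
    (hx : ∀ i, i < N → x i < x (i + 1))
    (f b fα : ℝ → ℝ)
    (hf : ContinuousOn f (Set.Icc (x 0) (x N)))
    (hb : ContinuousOn b (Set.Icc (x 0) (x N)))
    (hfα : ContinuousOn fα (Set.Icc (x 0) (x N)))
    (α : ℕ → ℝ)
    (hself : ∀ i ∈ Finset.Icc 1 N, ∀ t ∈ Set.Icc (x (i - 1)) (x i),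
      fα t = f t + α i * (fα (Linv x N i t) - b (Linv x N i t)))
    (Λ : ℝ) (hΛdef : Λ = ∑ i ∈ Finset.Icc 1 N, aCoef x N i * α i)
    (hΛ : Λ ≠ 1) :
    ∫ t in (x 0)..(x N), fα t =
      (1 / (1 - Λ)) * (∫ t in (x 0)..(x N), f t)
        - (Λ / (1 - Λ)) * ∫ t in (x 0)..(x N), b t := by
  have hstrict : StrictMonoOn x (Iic N) := strictMonoOn_Iic_of_lt_succ (by simpa using hx)
  have hmono := hstrict.monotoneOn
  have h0N : x 0 < x N := hstrict (Nat.zero_le _) (mem_Iic.mpr le_rfl) (by omega)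
  have hpiece : ∀ i ∈ Finset.Icc 1 N, ∫ t in x (i - 1)..x i, fα t = (∫ t in x (i - 1)..x i, f t)
      + aCoef x N i * α i * ((∫ t in x 0..x N, fα t) - ∫ t in x 0..x N, b t) := by
    intro i hi
    obtain ⟨hi1, hiN⟩ := Finset.mem_Icc.mp hi
    exact integral_subinterval_of_selfReferential h0N.ne'
      (hstrict (mem_Iic.mpr (by omega)) hiN (by omega))
      (hfα.intervalIntegrable_of_monotoneOn hmono (by omega) hiN)
      (hf.intervalIntegrable_of_monotoneOn hmono (by omega) hiN)
      (hfα.intervalIntegrable_of_monotoneOn hmono (Nat.zero_le _) le_rfl)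
      (hb.intervalIntegrable_of_monotoneOn hmono (Nat.zero_le _) le_rfl) (hself i hi)
  have hsum : ∀ {g : ℝ → ℝ}, ContinuousOn g (Icc (x 0) (x N)) →
      ∑ i ∈ Finset.Icc 1 N, ∫ t in x (i - 1)..x i, g t = ∫ t in x 0..x N, g t := fun hg ↦
    sum_Icc_integral_adjacent_intervals fun k hk ↦
      hg.intervalIntegrable_of_monotoneOn hmono hk.le hk
  have hfix : ∫ t in x 0..x N, fα t
      = (∫ t in x 0..x N, f t) + Λ * ((∫ t in x 0..x N, fα t) - ∫ t in x 0..x N, b t) := by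
    conv_lhs => rw [← hsum hfα]
    rw [Finset.sum_congr rfl hpiece, Finset.sum_add_distrib, hsum hf, ← Finset.sum_mul, hΛdef]
  have h1Λ : 1 - Λ ≠ 0 := sub_ne_zero.mpr hΛ.symm
  field_simp
  linear_combination hfix

theorem integral_alpha_fractal (N : ℕ) (hN : 1 ≤ N) (x : ℕ → ℝ)
    (hx : ∀ i, i < N → x i < x (i + 1))
    (f b fα : ℝ → ℝ)
    (hf : ContinuousOn f (Set.Icc (x 0) (x N)))
    (hb : ContinuousOn b (Set.Icc (x 0) (x N)))
    (hfα : ContinuousOn fα (Set.Icc (x 0) (x N)))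
    (hb0 : b (x 0) = f (x 0)) (hbN : b (x N) = f (x N))
    (α : ℕ → ℝ) (hα : ∀ i ∈ Finset.Icc 1 N, |α i| < 1)
    (hself : ∀ i ∈ Finset.Icc 1 N, ∀ t ∈ Set.Icc (x (i - 1)) (x i),
      fα t = f t + α i * (fα (Linv x N i t) - b (Linv x N i t)))
    (Λ : ℝ) (hΛdef : Λ = ∑ i ∈ Finset.Icc 1 N, aCoef x N i * α i)
    (hΛ : Λ ≠ 1) :
    ∫ t in (x 0)..(x N), fα t =
      (1 / (1 - Λ)) * (∫ t in (x 0)..(x N), f t)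
        - (Λ / (1 - Λ)) * ∫ t in (x 0)..(x N), b t :=
  integral_alpha_fractal_general N hN x hx f b fα hf hb hfα α hself Λ hΛdef hΛ
end

section
/- Let I = [x₀, x_N] with the uniform partition x_i = x₀ + i·h, h = (x_N − x₀)/N. Let f, b : I → ℝ be continuous with b agreeing with f at x₀ and x_N, and let α = (α₁,...,α_N) be a scale vector with |α_i| < 1 for each i and Σ_{i=1}^N α_i = 0. If f^α is the α-fractal function of f with base b and this uniform partition, then ∫_{x₀}^{x_N} f^α(x) dx = ∫_{x₀}^{x_N} f(x) dx. -/
/-!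
Integrating the self-referential equation over the piece `[x k, x (k+1)]` and substituting
`s = L⁻¹ t` gives `∫ (fα - f) = α (k+1) · a (k+1) · ∫_I (fα - b)`. Summing over the pieces,
`∫_I (fα - f) = λ · ∫_I (fα - b)` with `λ = Σ aᵢ αᵢ`, and for the uniform partition
`λ = (1/N) Σ αᵢ = 0`.
-/

open Finset intervalIntegral

section AffinePieces

variable {x : ℕ → ℝ} {N k : ℕ}

theorem Linv_succ_apply_left (ha : aCoef x N (k + 1) ≠ 0) :
    Linv x N (k + 1) (x k) = x 0 := by
  have hI : x N - x 0 ≠ 0 := fun h ↦ ha (by simp [aCoef, h])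
  rw [Linv, div_eq_iff ha, eCoef, aCoef, Nat.add_sub_cancel]
  field_simp
  ring

theorem Linv_succ_apply_right (ha : aCoef x N (k + 1) ≠ 0) :
    Linv x N (k + 1) (x (k + 1)) = x N := by
  have hI : x N - x 0 ≠ 0 := fun h ↦ ha (by simp [aCoef, h])
  rw [Linv, div_eq_iff ha, eCoef, aCoef, Nat.add_sub_cancel]
  field_simp
  ring

theorem integral_comp_Linv_succ (g : ℝ → ℝ) (ha : aCoef x N (k + 1) ≠ 0) :
    ∫ t in x k..x (k + 1), g (Linv x N (k + 1) t) = aCoef x N (k + 1) * ∫ s in x 0..x N, g s := by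
  have hL : ∀ t, Linv x N (k + 1) t =
      t / aCoef x N (k + 1) - eCoef x N (k + 1) / aCoef x N (k + 1) := fun t ↦ sub_div _ _ _
  simp_rw [hL, integral_comp_div_sub g ha, ← hL, Linv_succ_apply_left ha,
    Linv_succ_apply_right ha, smul_eq_mul]

end AffinePieces

theorem aCoef_succ_of_uniform {x : ℕ → ℝ} {N k : ℕ} (hk : k < N) (hI : x N ≠ x 0)
    (huni : ∀ i ≤ N, x i = x 0 + i * ((x N - x 0) / N)) :
    aCoef x N (k + 1) = (N : ℝ)⁻¹ := by
  have hN : (N : ℝ) ≠ 0 := by exact_mod_cast (Nat.zero_lt_of_lt hk).ne'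
  rw [aCoef, Nat.add_sub_cancel, huni (k + 1) hk, huni k hk.le]
  field_simp [sub_ne_zero.mpr hI]
  push_cast
  ring

theorem monotoneOn_of_uniform {x : ℕ → ℝ} {N : ℕ} (hle : x 0 ≤ x N)
    (huni : ∀ i ≤ N, x i = x 0 + i * ((x N - x 0) / N)) :
    MonotoneOn x (Set.Iic N) := by
  intro i hi j hj hij
  have hstep : 0 ≤ (x N - x 0) / N := div_nonneg (sub_nonneg.mpr hle) N.cast_nonneg
  rw [huni i hi, huni j hj]
  gcongr

theorem integral_sub_eq_sum_mul_integral_sub {x : ℕ → ℝ} {N : ℕ} {f b fα : ℝ → ℝ} {α : ℕ → ℝ}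
    (ha : ∀ k < N, aCoef x N (k + 1) ≠ 0)
    (hint : ∀ k < N, IntervalIntegrable (fun t ↦ fα t - f t) MeasureTheory.volume (x k) (x (k + 1)))
    (hself : ∀ k < N, ∀ t ∈ Set.uIcc (x k) (x (k + 1)),
      fα t = f t + α (k + 1) * (fα (Linv x N (k + 1) t) - b (Linv x N (k + 1) t))) :
    ∫ t in x 0..x N, (fα t - f t) =
      (∑ k ∈ range N, aCoef x N (k + 1) * α (k + 1)) * ∫ s in x 0..x N, (fα s - b s) := by
  rw [← sum_integral_adjacent_intervals hint, sum_mul]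
  refine sum_congr rfl fun k hk ↦ ?_
  have hk : k < N := mem_range.mp hk
  calc ∫ t in x k..x (k + 1), (fα t - f t)
      = ∫ t in x k..x (k + 1), α (k + 1) * (fα (Linv x N (k + 1) t) - b (Linv x N (k + 1) t)) :=
        integral_congr fun t ht ↦ by rw [hself k hk t ht]; ring
    _ = _ := by
        rw [integral_const_mul, integral_comp_Linv_succ (fun s ↦ fα s - b s) (ha k hk)]
        ring

theorem integral_eq_of_sum_scales_zero_general (N : ℕ) (x : ℕ → ℝ)
    (hlt : x 0 < x N)
    (huni : ∀ i ≤ N, x i = x 0 + i * ((x N - x 0) / N))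
    (f b fα : ℝ → ℝ)
    (hf : ContinuousOn f (Set.Icc (x 0) (x N)))
    (hfα : ContinuousOn fα (Set.Icc (x 0) (x N)))
    (α : ℕ → ℝ)
    (hsum : ∑ i ∈ Finset.Icc 1 N, α i = 0)
    (hself : ∀ i ∈ Finset.Icc 1 N, ∀ t ∈ Set.Icc (x (i - 1)) (x i),
      fα t = f t + α i * (fα (Linv x N i t) - b (Linv x N i t))) :
    ∫ t in (x 0)..(x N), fα t = ∫ t in (x 0)..(x N), f t := by
  have hmono := monotoneOn_of_uniform hlt.le huni
  have hpiece : ∀ k < N, Set.uIcc (x k) (x (k + 1)) = Set.Icc (x k) (x (k + 1)) := fun k hk ↦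
    Set.uIcc_of_le (hmono (Set.mem_Iic.2 hk.le) (Set.mem_Iic.2 hk) k.le_succ)
  have hpiece_sub : ∀ k < N, Set.Icc (x k) (x (k + 1)) ⊆ Set.Icc (x 0) (x N) := fun k hk ↦
    Set.Icc_subset_Icc (hmono (Set.mem_Iic.2 (Nat.zero_le N)) (Set.mem_Iic.2 hk.le) k.zero_le)
      (hmono (Set.mem_Iic.2 hk) Set.self_mem_Iic hk)
  have ha : ∀ k < N, aCoef x N (k + 1) = (N : ℝ)⁻¹ := fun k hk ↦
    aCoef_succ_of_uniform hk hlt.ne' huni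
  have hsum' : ∑ k ∈ range N, α (k + 1) = 0 := by
    rwa [range_eq_Ico, sum_Ico_add', zero_add, Finset.Ico_add_one_right_eq_Icc]
  have hI := Set.uIcc_of_le hlt.le
  have hdiff := integral_sub_eq_sum_mul_integral_sub (b := b)
    (fun k hk ↦ by simpa [ha k hk] using Nat.ne_zero_of_lt hk)
    (fun k hk ↦
      ((hfα.sub hf).mono ((hpiece k hk).trans_subset (hpiece_sub k hk))).intervalIntegrable)
    (fun k hk t ht ↦ hself (k + 1) (by simpa using hk) t (by simpa [hpiece k hk] using ht))
  rw [sum_congr rfl fun k hk ↦ by rw [ha k (mem_range.1 hk)], ← mul_sum, hsum', mul_zero,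
    zero_mul, integral_sub (hfα.mono hI.subset).intervalIntegrable
      (hf.mono hI.subset).intervalIntegrable] at hdiff
  exact sub_eq_zero.mp hdiff

theorem integral_eq_of_sum_scales_zero (N : ℕ) (hN : 1 ≤ N) (x : ℕ → ℝ)
    (hlt : x 0 < x N)
    (huni : ∀ i ≤ N, x i = x 0 + i * ((x N - x 0) / N))
    (f b fα : ℝ → ℝ)
    (hf : ContinuousOn f (Set.Icc (x 0) (x N)))
    (hb : ContinuousOn b (Set.Icc (x 0) (x N)))
    (hfα : ContinuousOn fα (Set.Icc (x 0) (x N)))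
    (hb0 : b (x 0) = f (x 0)) (hbN : b (x N) = f (x N))
    (α : ℕ → ℝ) (hα : ∀ i ∈ Finset.Icc 1 N, |α i| < 1)
    (hsum : ∑ i ∈ Finset.Icc 1 N, α i = 0)
    (hself : ∀ i ∈ Finset.Icc 1 N, ∀ t ∈ Set.Icc (x (i - 1)) (x i),
      fα t = f t + α i * (fα (Linv x N i t) - b (Linv x N i t))) :
    ∫ t in (x 0)..(x N), fα t = ∫ t in (x 0)..(x N), f t :=
  integral_eq_of_sum_scales_zero_general N x hlt huni f b fα hf hfα α hsum hself
end

section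
/- Let f_b^α be the α-fractal function of a continuous f : I = [x₀,x_N] → ℝ with base b (agreeing with f at the endpoints), a fixed partition, and scale vector α with |α_i| < 1. Let g : ℝ → ℝ be an affine map, g(t) = pt + q. Then g ∘ f_b^α is the α-fractal function of g ∘ f with base g ∘ b; that is, (g ∘ f)_{g∘b}^α = g ∘ f_b^α. -/
/-!
Both `h` and `g ∘ fα` are continuous solutions of the same self-referential equation, because
`g` is affine: `g y - g y' = p (y - y')`. Hence their difference `D` satisfies
`D t = α i * D (Linv x N i t)` on the `i`-th subinterval. At a point where `|D|` is maximal this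
gives `|D| ≤ |α i| |D|` with `|α i| < 1`, so `D = 0`.
-/

theorem eqOn_zero_of_forall_eq_mul_of_abs_lt_one {X : Type*} [TopologicalSpace X] {s : Set X}
    (hs : IsCompact s) {D : X → ℝ} (hD : ContinuousOn D s)
    (hself : ∀ t ∈ s, ∃ u ∈ s, ∃ c : ℝ, |c| < 1 ∧ D t = c * D u) :
    Set.EqOn D 0 s := by
  intro t ht
  obtain ⟨t₀, ht₀, hmax⟩ := hs.exists_isMaxOn ⟨t, ht⟩ hD.abs
  obtain ⟨u, hu, c, hc, hD₀⟩ := hself t₀ ht₀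
  have hle : |D t₀| ≤ |c| * |D t₀| :=
    calc |D t₀| = |c| * |D u| := by rw [hD₀, abs_mul]
      _ ≤ |c| * |D t₀| := mul_le_mul_of_nonneg_left (hmax hu) (abs_nonneg c)
  have hmax_zero : |D t₀| = 0 := by nlinarith [abs_nonneg (D t₀)]
  exact abs_eq_zero.mp (le_antisymm ((hmax ht).trans hmax_zero.le) (abs_nonneg _))

theorem exists_mem_Icc_pred_of_mem_Icc {α : Type*} [LinearOrder α] (x : ℕ → α) {N : ℕ}
    (hN : 1 ≤ N) {t : α} (ht : t ∈ Set.Icc (x 0) (x N)) :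
    ∃ i ∈ Finset.Icc 1 N, t ∈ Set.Icc (x (i - 1)) (x i) := by
  induction N, hN using Nat.le_induction with
  | base => exact ⟨1, by simp, ht⟩
  | succ N hN ih =>
    by_cases htN : t ≤ x N
    · obtain ⟨i, hi, hti⟩ := ih ⟨ht.1, htN⟩
      exact ⟨i, Finset.Icc_subset_Icc_right N.le_succ hi, hti⟩
    · exact ⟨N + 1, by simp, (not_le.mp htN).le, ht.2⟩

theorem Linv_mem_Icc {x : ℕ → ℝ} {N i : ℕ} (hI : x 0 < x N) (hi : x (i - 1) < x i) {t : ℝ}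
    (ht : t ∈ Set.Icc (x (i - 1)) (x i)) : Linv x N i t ∈ Set.Icc (x 0) (x N) := by
  have hlen : x N - x 0 ≠ 0 := (sub_pos.mpr hI).ne'
  have ha : 0 < aCoef x N i := div_pos (sub_pos.mpr hi) (sub_pos.mpr hI)
  have hleft : x 0 * aCoef x N i = x (i - 1) - eCoef x N i := by
    unfold aCoef eCoef; field_simp; ring
  have hright : x N * aCoef x N i = x i - eCoef x N i := by
    unfold aCoef eCoef; field_simp; ring
  constructor
  · rw [Linv, le_div_iff₀ ha, hleft]; linarith [ht.1]
  · rw [Linv, div_le_iff₀ ha, hright]; linarith [ht.2]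

theorem fractal_affine_composition_general (N : ℕ) (hN : 1 ≤ N) (x : ℕ → ℝ)
    (hx : ∀ i, i < N → x i < x (i + 1))
    (f b : ℝ → ℝ)
    (α : ℕ → ℝ) (hα : ∀ i ∈ Finset.Icc 1 N, |α i| < 1)
    (fα : ℝ → ℝ) (hfα : ContinuousOn fα (Set.Icc (x 0) (x N)))
    (hself : ∀ i ∈ Finset.Icc 1 N, ∀ t ∈ Set.Icc (x (i - 1)) (x i),
      fα t = f t + α i * (fα (Linv x N i t) - b (Linv x N i t)))
    (p q : ℝ) (g : ℝ → ℝ) (hgdef : ∀ t, g t = p * t + q)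
    (h : ℝ → ℝ) (hh : ContinuousOn h (Set.Icc (x 0) (x N)))
    (hselfh : ∀ i ∈ Finset.Icc 1 N, ∀ t ∈ Set.Icc (x (i - 1)) (x i),
      h t = g (f t) + α i * (h (Linv x N i t) - g (b (Linv x N i t)))) :
    ∀ t ∈ Set.Icc (x 0) (x N), h t = g (fα t) := by
  have hxmono : StrictMonoOn x (Set.Iic N) := strictMonoOn_Iic_of_lt_succ hx
  have hI : x 0 < x N := hxmono (by simp) (by simp) (by omega)
  have hg : g = fun t ↦ p * t + q := funext hgdef
  have hD : ContinuousOn (fun t ↦ h t - g (fα t)) (Set.Icc (x 0) (x N)) := by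
    subst hg; fun_prop
  have hDself : ∀ t ∈ Set.Icc (x 0) (x N), ∃ u ∈ Set.Icc (x 0) (x N), ∃ c : ℝ, |c| < 1 ∧
      h t - g (fα t) = c * (h u - g (fα u)) := by
    intro t ht
    obtain ⟨i, hi, hti⟩ := exists_mem_Icc_pred_of_mem_Icc x hN ht
    have hi' := Finset.mem_Icc.mp hi
    have hsub : x (i - 1) < x i := by simpa [Nat.sub_add_cancel hi'.1] using hx (i - 1) (by omega)
    refine ⟨Linv x N i t, Linv_mem_Icc hI hsub hti, α i, hα i hi, ?_⟩
    rw [hselfh i hi t hti, hself i hi t hti]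
    simp only [hgdef]
    ring
  intro t ht
  exact sub_eq_zero.mp (eqOn_zero_of_forall_eq_mul_of_abs_lt_one isCompact_Icc hD hDself ht)

theorem fractal_affine_composition (N : ℕ) (hN : 1 ≤ N) (x : ℕ → ℝ)
    (hx : ∀ i, i < N → x i < x (i + 1))
    (f b : ℝ → ℝ)
    (hf : ContinuousOn f (Set.Icc (x 0) (x N)))
    (hb : ContinuousOn b (Set.Icc (x 0) (x N)))
    (hb0 : b (x 0) = f (x 0)) (hbN : b (x N) = f (x N))
    (α : ℕ → ℝ) (hα : ∀ i ∈ Finset.Icc 1 N, |α i| < 1)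
    (fα : ℝ → ℝ) (hfα : ContinuousOn fα (Set.Icc (x 0) (x N)))
    (hself : ∀ i ∈ Finset.Icc 1 N, ∀ t ∈ Set.Icc (x (i - 1)) (x i),
      fα t = f t + α i * (fα (Linv x N i t) - b (Linv x N i t)))
    (p q : ℝ) (g : ℝ → ℝ) (hgdef : ∀ t, g t = p * t + q)
    (h : ℝ → ℝ) (hh : ContinuousOn h (Set.Icc (x 0) (x N)))
    (hselfh : ∀ i ∈ Finset.Icc 1 N, ∀ t ∈ Set.Icc (x (i - 1)) (x i),
      h t = g (f t) + α i * (h (Linv x N i t) - g (b (Linv x N i t)))) :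
    ∀ t ∈ Set.Icc (x 0) (x N), h t = g (fα t) :=
  fractal_affine_composition_general N hN x hx f b α hα fα hfα hself p q g hgdef h hh hselfh
end

section
/- Let f_b^α be the α-fractal function of a continuous f : I = [x₀,x_N] → ℝ with base b (agreeing with f at the endpoints), partition x₀ < ... < x_N, and scale vector α with |α_i| < 1 and λ = Σ a_i α_i ≠ 1, where a_i = (x_i − x_{i-1})/(x_N − x₀). If g : ℝ → ℝ is an affine map, then ∫_{x₀}^{x_N} (g ∘ f_b^α)(x) dx = (1/(1−λ)) ∫_{x₀}^{x_N} (g ∘ f)(x) dx − (λ/(1−λ)) ∫_{x₀}^{x_N} (g ∘ b)(x) dx. -/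
/-!
Integrating the self-referential equation `h = f + αᵢ (h - b) ∘ Lᵢ⁻¹` over `[x (i-1), x i]` and
substituting `s = Lᵢ⁻¹ t` gives `∫ h = ∫ f + aᵢ αᵢ (∫₀ᴺ h - ∫₀ᴺ b)` on that piece. Summing over the
pieces yields `∫ h = ∫ f + Λ (∫ h - ∫ b)`, which is solved for `∫ h` when `Λ ≠ 1`. An affine map
`g` commutes with the equation, so `g ∘ h` is the fractal function of `g ∘ f` with base `g ∘ b`.
-/

open MeasureTheory intervalIntegral

section Partition

variable {x : ℕ → ℝ} {N i : ℕ}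

lemma monotoneOn_Iic_of_lt_add_one (hx : ∀ k < N, x k < x (k + 1)) : MonotoneOn x (Set.Iic N) :=
  (strictMonoOn_Iic_of_lt_succ fun k hk => by simpa using hx k hk).monotoneOn

lemma lt_of_mem_Icc_one (hx : ∀ k < N, x k < x (k + 1)) (hi : i ∈ Finset.Icc 1 N) :
    x (i - 1) < x i := by
  obtain ⟨hi1, hiN⟩ := Finset.mem_Icc.1 hi
  simpa [Nat.sub_add_cancel hi1] using hx (i - 1) (by omega)

lemma uIcc_subset_uIcc_of_mem_Icc_one (hx : ∀ k < N, x k < x (k + 1)) (hi : i ∈ Finset.Icc 1 N) :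
    Set.uIcc (x (i - 1)) (x i) ⊆ Set.uIcc (x 0) (x N) := by
  obtain ⟨hi1, hiN⟩ := Finset.mem_Icc.1 hi
  have hmono := monotoneOn_Iic_of_lt_add_one hx
  have h0 : x 0 ≤ x (i - 1) := hmono (by simp) (by simp; omega) (Nat.zero_le _)
  have hN : x i ≤ x N := hmono (by simp; omega) (by simp) hiN
  have hlt := lt_of_mem_Icc_one hx hi
  rw [Set.uIcc_of_le hlt.le, Set.uIcc_of_le (by linarith)]
  exact Set.Icc_subset_Icc h0 hN

lemma aCoef_ne_zero (h0 : x 0 ≠ x N) (hi : x (i - 1) ≠ x i) : aCoef x N i ≠ 0 :=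
  div_ne_zero (sub_ne_zero.2 hi.symm) (sub_ne_zero.2 h0.symm)

lemma Linv_left (h0 : x 0 ≠ x N) (hi : x (i - 1) ≠ x i) : Linv x N i (x (i - 1)) = x 0 := by
  have : x N - x 0 ≠ 0 := sub_ne_zero.2 h0.symm
  have : x i - x (i - 1) ≠ 0 := sub_ne_zero.2 hi.symm
  unfold Linv aCoef eCoef
  field_simp
  ring

lemma Linv_right (h0 : x 0 ≠ x N) (hi : x (i - 1) ≠ x i) : Linv x N i (x i) = x N := by
  have : x N - x 0 ≠ 0 := sub_ne_zero.2 h0.symm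
  have : x i - x (i - 1) ≠ 0 := sub_ne_zero.2 hi.symm
  unfold Linv aCoef eCoef
  field_simp
  ring

end Partition

section Integral

variable {E : Type*} [NormedAddCommGroup E] {x : ℕ → ℝ} {N i : ℕ}

lemma IntervalIntegrable.comp_Linv (ha : aCoef x N i ≠ 0) {φ : ℝ → E} {c d : ℝ}
    (hφ : IntervalIntegrable φ volume (Linv x N i c) (Linv x N i d)) :
    IntervalIntegrable (fun t => φ (Linv x N i t)) volume c d := by
  have := (hφ.comp_mul_right (c := (aCoef x N i)⁻¹)).comp_sub_right (eCoef x N i)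
  simpa [Linv, div_eq_mul_inv, ha] using this

variable [NormedSpace ℝ E]

lemma integral_comp_Linv_s7 (ha : aCoef x N i ≠ 0) (φ : ℝ → E) (c d : ℝ) :
    ∫ t in c..d, φ (Linv x N i t) = aCoef x N i • ∫ s in Linv x N i c..Linv x N i d, φ s := by
  unfold Linv
  rw [integral_comp_sub_right (fun u => φ (u / aCoef x N i)), integral_comp_div φ ha]

lemma sum_integral_Icc_one_eq_integral (hx : ∀ k < N, x k < x (k + 1)) {φ : ℝ → E}
    (hφ : IntervalIntegrable φ volume (x 0) (x N)) :
    ∑ i ∈ Finset.Icc 1 N, ∫ t in x (i - 1)..x i, φ t = ∫ t in x 0..x N, φ t := by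
  rw [← sum_integral_adjacent_intervals fun k hk => hφ.mono_set <| by
      simpa using uIcc_subset_uIcc_of_mem_Icc_one hx (i := k + 1) (by simp; omega),
    ← Finset.Ico_add_one_right_eq_Icc, Finset.sum_Ico_eq_sum_range]
  simp [add_comm]

end Integral

/-- The self-referential equation of the α-fractal function `h = f_b^α`; continuity of `h`, which
makes the solution unique, is kept as a separate hypothesis. -/
def IsFractalFunction {E : Type*} [AddCommGroup E] [Module ℝ E] (x : ℕ → ℝ) (N : ℕ)
    (α : ℕ → ℝ) (f b h : ℝ → E) : Prop :=
  ∀ i ∈ Finset.Icc 1 N, ∀ t ∈ Set.Icc (x (i - 1)) (x i),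
    h t = f t + α i • (h (Linv x N i t) - b (Linv x N i t))

namespace IsFractalFunction

variable {E : Type*} {x : ℕ → ℝ} {N : ℕ} {α : ℕ → ℝ} {f b h : ℝ → E}

lemma smul_add_const [AddCommGroup E] [Module ℝ E] (hh : IsFractalFunction x N α f b h)
    (p : ℝ) (q : E) :
    IsFractalFunction x N α (fun t => p • f t + q) (fun t => p • b t + q)
      (fun t => p • h t + q) := by
  intro i hi t ht
  dsimp only
  rw [hh i hi t ht]
  module

variable [NormedAddCommGroup E] [NormedSpace ℝ E]

lemma integral_piece_eq (hfr : IsFractalFunction x N α f b h) (hx : ∀ k < N, x k < x (k + 1))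
    (hf : IntervalIntegrable f volume (x 0) (x N)) (hb : IntervalIntegrable b volume (x 0) (x N))
    (hh : IntervalIntegrable h volume (x 0) (x N)) {i : ℕ} (hi : i ∈ Finset.Icc 1 N) :
    ∫ t in x (i - 1)..x i, h t =
      (∫ t in x (i - 1)..x i, f t) + (aCoef x N i * α i) • ∫ s in x 0..x N, (h s - b s) := by
  have hsub := uIcc_subset_uIcc_of_mem_Icc_one hx hi
  have hlt := lt_of_mem_Icc_one hx hi
  have h0N : x 0 ≠ x N := fun h0N => hlt.ne <| by
    have h1 := hsub Set.left_mem_uIcc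
    have h2 := hsub Set.right_mem_uIcc
    rw [h0N, Set.uIcc_self] at h1 h2
    exact h1.trans h2.symm
  have ha := aCoef_ne_zero h0N hlt.ne
  have hcomp : IntervalIntegrable (fun t => h (Linv x N i t) - b (Linv x N i t)) volume
      (x (i - 1)) (x i) :=
    IntervalIntegrable.comp_Linv ha (φ := fun s => h s - b s)
      (by rw [Linv_left h0N hlt.ne, Linv_right h0N hlt.ne]; exact hh.sub hb)
  calc ∫ t in x (i - 1)..x i, h t
      = ∫ t in x (i - 1)..x i, (f t + α i • (h (Linv x N i t) - b (Linv x N i t))) :=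
        integral_congr fun t ht => hfr i hi t (by rwa [Set.uIcc_of_le hlt.le] at ht)
    _ = (∫ t in x (i - 1)..x i, f t) +
          α i • ∫ t in x (i - 1)..x i, (h (Linv x N i t) - b (Linv x N i t)) := by
        rw [integral_add (f := f) (g := fun t => α i • (h (Linv x N i t) - b (Linv x N i t)))
          (hf.mono_set hsub) (hcomp.smul (α i)), intervalIntegral.integral_smul]
    _ = _ := by
        rw [integral_comp_Linv_s7 ha (fun s => h s - b s), Linv_left h0N hlt.ne,
          Linv_right h0N hlt.ne, smul_smul, mul_comm]

lemma integral_eq_add_smul (hfr : IsFractalFunction x N α f b h)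
    (hx : ∀ k < N, x k < x (k + 1)) (hf : IntervalIntegrable f volume (x 0) (x N))
    (hb : IntervalIntegrable b volume (x 0) (x N)) (hh : IntervalIntegrable h volume (x 0) (x N)) :
    ∫ t in x 0..x N, h t = (∫ t in x 0..x N, f t) +
      (∑ i ∈ Finset.Icc 1 N, aCoef x N i * α i) • ∫ s in x 0..x N, (h s - b s) := by
  rw [← sum_integral_Icc_one_eq_integral hx hh, ← sum_integral_Icc_one_eq_integral hx hf,
    Finset.sum_smul, ← Finset.sum_add_distrib]
  exact Finset.sum_congr rfl fun i hi => hfr.integral_piece_eq hx hf hb hh hi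

lemma integral_eq (hfr : IsFractalFunction x N α f b h)
    (hx : ∀ k < N, x k < x (k + 1)) (hf : IntervalIntegrable f volume (x 0) (x N))
    (hb : IntervalIntegrable b volume (x 0) (x N)) (hh : IntervalIntegrable h volume (x 0) (x N))
    {Λ : ℝ} (hΛdef : Λ = ∑ i ∈ Finset.Icc 1 N, aCoef x N i * α i) (hΛ : Λ ≠ 1) :
    ∫ t in x 0..x N, h t =
      (1 / (1 - Λ)) • (∫ t in x 0..x N, f t) - (Λ / (1 - Λ)) • ∫ t in x 0..x N, b t := by
  have hkey := hfr.integral_eq_add_smul hx hf hb hh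
  rw [← hΛdef, integral_sub hh hb] at hkey
  have h1Λ : 1 - Λ ≠ 0 := sub_ne_zero.2 hΛ.symm
  have hsolved : (1 - Λ) • ∫ t in x 0..x N, h t =
      (∫ t in x 0..x N, f t) - Λ • ∫ t in x 0..x N, b t := by
    linear_combination (norm := module) hkey
  rw [div_eq_inv_mul, div_eq_inv_mul, mul_smul, mul_smul, ← smul_sub, one_smul, ← hsolved,
    inv_smul_smul₀ h1Λ]

end IsFractalFunction

theorem integral_affine_composed_fractal_general (N : ℕ) (x : ℕ → ℝ)
    (hx : ∀ i, i < N → x i < x (i + 1))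
    (f b : ℝ → ℝ)
    (hf : ContinuousOn f (Set.Icc (x 0) (x N)))
    (hb : ContinuousOn b (Set.Icc (x 0) (x N)))
    (α : ℕ → ℝ)
    (fα : ℝ → ℝ) (hfα : ContinuousOn fα (Set.Icc (x 0) (x N)))
    (hself : ∀ i ∈ Finset.Icc 1 N, ∀ t ∈ Set.Icc (x (i - 1)) (x i),
      fα t = f t + α i * (fα (Linv x N i t) - b (Linv x N i t)))
    (p q : ℝ) (g : ℝ → ℝ) (hgdef : ∀ t, g t = p * t + q)
    (Λ : ℝ) (hΛdef : Λ = ∑ i ∈ Finset.Icc 1 N, aCoef x N i * α i)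
    (hΛ : Λ ≠ 1) :
    ∫ t in (x 0)..(x N), g (fα t) =
      (1 / (1 - Λ)) * (∫ t in (x 0)..(x N), g (f t))
        - (Λ / (1 - Λ)) * ∫ t in (x 0)..(x N), g (b t) := by
  have hg : g = fun t => p • t + q := funext hgdef
  have h0N : x 0 ≤ x N := monotoneOn_Iic_of_lt_add_one hx (by simp) (by simp) (Nat.zero_le N)
  have hg_cont : Continuous g := by rw [hg]; fun_prop
  have hint {φ : ℝ → ℝ} (hφ : ContinuousOn φ (Set.Icc (x 0) (x N))) :
      IntervalIntegrable (fun t => g (φ t)) volume (x 0) (x N) :=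
    (hg_cont.comp_continuousOn hφ).intervalIntegrable_of_Icc h0N
  have hfr : IsFractalFunction x N α (fun t => g (f t)) (fun t => g (b t))
      (fun t => g (fα t)) := by
    rw [hg]
    exact IsFractalFunction.smul_add_const hself p q
  exact hfr.integral_eq hx (hint hf) (hint hb) (hint hfα) hΛdef hΛ

theorem integral_affine_composed_fractal (N : ℕ) (hN : 1 ≤ N) (x : ℕ → ℝ)
    (hx : ∀ i, i < N → x i < x (i + 1))
    (f b : ℝ → ℝ)
    (hf : ContinuousOn f (Set.Icc (x 0) (x N)))
    (hb : ContinuousOn b (Set.Icc (x 0) (x N)))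
    (hb0 : b (x 0) = f (x 0)) (hbN : b (x N) = f (x N))
    (α : ℕ → ℝ) (hα : ∀ i ∈ Finset.Icc 1 N, |α i| < 1)
    (fα : ℝ → ℝ) (hfα : ContinuousOn fα (Set.Icc (x 0) (x N)))
    (hself : ∀ i ∈ Finset.Icc 1 N, ∀ t ∈ Set.Icc (x (i - 1)) (x i),
      fα t = f t + α i * (fα (Linv x N i t) - b (Linv x N i t)))
    (p q : ℝ) (g : ℝ → ℝ) (hgdef : ∀ t, g t = p * t + q)
    (Λ : ℝ) (hΛdef : Λ = ∑ i ∈ Finset.Icc 1 N, aCoef x N i * α i)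
    (hΛ : Λ ≠ 1) :
    ∫ t in (x 0)..(x N), g (fα t) =
      (1 / (1 - Λ)) * (∫ t in (x 0)..(x N), g (f t))
        - (Λ / (1 - Λ)) * ∫ t in (x 0)..(x N), g (b t) :=
  integral_affine_composed_fractal_general N x hx f b hf hb α fα hfα hself p q g hgdef Λ hΛdef hΛ
end
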